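/- For every real x > −1, Φ(x) ≥ 1 − (√(8/π) / (3x + √(x² + 8))) · e^{−x²/2}. -/

import Mathlib

open Real MeasureTheory Set Filter Topology

/-- The standard normal cumulative distribution function
`Φ(x) = (2π)^{-1/2} ∫_{−∞}^x exp(−t²/2) dt`. -/
noncomputable def stdNormalCDF (x : ℝ) : ℝ :=
    (Real.sqrt (2 * Real.pi))⁻¹ * ∫ t in Set.Iic x, Real.exp (-t ^ 2 / 2)

namespace StdNormalAux

lemma gauss_eq : (fun t : ℝ => Real.exp (-t ^ 2 / 2)) =
    (fun t : ℝ => Real.exp (-(1/2 : ℝ) * t ^ 2)) := by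
  funext t; ring_nf

lemma integrable_gauss : Integrable (fun t : ℝ => Real.exp (-t ^ 2 / 2)) := by
  rw [gauss_eq]
  exact integrable_exp_neg_mul_sq (by norm_num)

lemma integral_gauss_total : (∫ t : ℝ, Real.exp (-t ^ 2 / 2)) = Real.sqrt (2 * Real.pi) := by
  rw [gauss_eq, integral_gaussian]
  norm_num [mul_comm]

/-- The auxiliary correction term. -/
noncomputable def M (x : ℝ) : ℝ :=
  Real.sqrt (8 / Real.pi) / (3 * x + Real.sqrt (x ^ 2 + 8)) * Real.exp (-x ^ 2 / 2)

noncomputable def G (x : ℝ) : ℝ := stdNormalCDF x + M x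

lemma sqrt_two_pi_pos : 0 < Real.sqrt (2 * Real.pi) :=
  Real.sqrt_pos.2 (by positivity)

lemma A_eq : Real.sqrt (8 / Real.pi) = 4 * (Real.sqrt (2 * Real.pi))⁻¹ := by
  rw [show (8 : ℝ) / Real.pi = 16 / (2 * Real.pi) by ring,
    Real.sqrt_div (by norm_num : (0:ℝ) ≤ 16), show (16:ℝ) = 4 ^ 2 by norm_num,
    Real.sqrt_sq (by norm_num : (0:ℝ) ≤ 4), div_eq_mul_inv]

lemma s_pos (x : ℝ) : 0 < Real.sqrt (x ^ 2 + 8) := Real.sqrt_pos.2 (by positivity)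

lemma s_sq (x : ℝ) : Real.sqrt (x ^ 2 + 8) ^ 2 = x ^ 2 + 8 :=
  Real.sq_sqrt (by positivity)

lemma d_pos {x : ℝ} (hx : -1 < x) : 0 < 3 * x + Real.sqrt (x ^ 2 + 8) := by
  have h1 := s_pos x
  have h2 := s_sq x
  nlinarith [h1, h2, sq_nonneg (x + 1), sq_nonneg (x - 1)]

lemma hasDerivAt_cdf (x : ℝ) :
    HasDerivAt stdNormalCDF ((Real.sqrt (2 * Real.pi))⁻¹ * Real.exp (-x ^ 2 / 2)) x := by
  have hc : Continuous fun t : ℝ => Real.exp (-t ^ 2 / 2) := by continuity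
  have hfun : stdNormalCDF = fun y =>
      (Real.sqrt (2 * Real.pi))⁻¹ *
        ((∫ t in Iic (0:ℝ), Real.exp (-t ^ 2 / 2)) + ∫ t in (0:ℝ)..y, Real.exp (-t ^ 2 / 2)) := by
    funext y
    unfold stdNormalCDF
    rw [← intervalIntegral.integral_Iic_sub_Iic integrable_gauss.integrableOn
      integrable_gauss.integrableOn]
    ring
  rw [hfun]
  exact (((hc.integral_hasStrictDerivAt 0 x).hasDerivAt).const_add _).const_mul _

lemma cdf_tendsto : Tendsto stdNormalCDF atTop (𝓝 1) := by
  have h := tendsto_setIntegral_of_monotone (μ := (volume : Measure ℝ))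
    (f := fun t : ℝ => Real.exp (-t ^ 2 / 2)) (s := fun r : ℝ => Iic r)
    (fun _ => measurableSet_Iic) (fun a b hab => Iic_subset_Iic.2 hab)
    (by rw [iUnion_Iic]; exact integrable_gauss.integrableOn)
  rw [iUnion_Iic, Measure.restrict_univ, integral_gauss_total] at h
  have h2 := h.const_mul (Real.sqrt (2 * Real.pi))⁻¹
  rw [inv_mul_cancel₀ (ne_of_gt sqrt_two_pi_pos)] at h2
  exact h2

lemma M_tendsto : Tendsto M atTop (𝓝 0) := by
  have hden : Tendsto (fun y : ℝ => 3 * y + Real.sqrt (y ^ 2 + 8)) atTop atTop := by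
    apply tendsto_atTop_mono (fun y => ?_)
      (tendsto_id.const_mul_atTop (by norm_num : (0:ℝ) < 3))
    have := Real.sqrt_nonneg (y ^ 2 + 8)
    simp only [id_eq]; linarith
  have hinv : Tendsto (fun y : ℝ => (3 * y + Real.sqrt (y ^ 2 + 8))⁻¹) atTop (𝓝 0) :=
    hden.inv_tendsto_atTop
  have hA : Tendsto (fun y : ℝ => Real.sqrt (8 / Real.pi) *
      (3 * y + Real.sqrt (y ^ 2 + 8))⁻¹) atTop (𝓝 0) := by
    simpa using hinv.const_mul (Real.sqrt (8 / Real.pi))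
  apply squeeze_zero' ?_ ?_ hA
  · filter_upwards [eventually_gt_atTop (-1:ℝ)] with y hy
    exact mul_nonneg (div_nonneg (Real.sqrt_nonneg _) (d_pos hy).le) (Real.exp_pos _).le
  · filter_upwards [eventually_gt_atTop (-1:ℝ)] with y hy
    have hE : Real.exp (-y ^ 2 / 2) ≤ 1 := Real.exp_le_one_iff.2 (by nlinarith [sq_nonneg y])
    have h1 : 0 ≤ Real.sqrt (8 / Real.pi) / (3 * y + Real.sqrt (y ^ 2 + 8)) :=
      div_nonneg (Real.sqrt_nonneg _) (d_pos hy).le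
    calc M y ≤ Real.sqrt (8 / Real.pi) / (3 * y + Real.sqrt (y ^ 2 + 8)) * 1 := by
          unfold M; exact mul_le_mul_of_nonneg_left hE h1
      _ = Real.sqrt (8 / Real.pi) * (3 * y + Real.sqrt (y ^ 2 + 8))⁻¹ := by
          rw [mul_one, div_eq_mul_inv]

/-- The raw derivative of `G`. -/
noncomputable def D (x : ℝ) : ℝ :=
  (Real.sqrt (2 * Real.pi))⁻¹ * Real.exp (-x ^ 2 / 2) +
    (-(Real.sqrt (8 / Real.pi) * (3 + x / Real.sqrt (x ^ 2 + 8))) /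
      (3 * x + Real.sqrt (x ^ 2 + 8)) ^ 2 * Real.exp (-x ^ 2 / 2) +
     Real.sqrt (8 / Real.pi) / (3 * x + Real.sqrt (x ^ 2 + 8)) *
      (-x * Real.exp (-x ^ 2 / 2)))

lemma hasDerivAt_M {x : ℝ} (hx : -1 < x) :
    HasDerivAt M
      (-(Real.sqrt (8 / Real.pi) * (3 + x / Real.sqrt (x ^ 2 + 8))) /
        (3 * x + Real.sqrt (x ^ 2 + 8)) ^ 2 * Real.exp (-x ^ 2 / 2) +
       Real.sqrt (8 / Real.pi) / (3 * x + Real.sqrt (x ^ 2 + 8)) *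
        (-x * Real.exp (-x ^ 2 / 2))) x := by
  have hs0 := s_pos x
  have hinner : HasDerivAt (fun y : ℝ => y ^ 2 + 8) (2 * x) x := by
    simpa using (hasDerivAt_pow 2 x).add_const 8
  have hsq : HasDerivAt (fun y : ℝ => Real.sqrt (y ^ 2 + 8)) (x / Real.sqrt (x ^ 2 + 8)) x := by
    have h := (Real.hasDerivAt_sqrt (by positivity : x ^ 2 + 8 ≠ 0)).comp x hinner
    refine HasDerivAt.congr_deriv h ?_
    field_simp
  have hd : HasDerivAt (fun y : ℝ => 3 * y + Real.sqrt (y ^ 2 + 8))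
      (3 + x / Real.sqrt (x ^ 2 + 8)) x := by
    have h := ((hasDerivAt_id x).const_mul 3).add hsq
    simp only [id, mul_one] at h
    exact h
  have hE : HasDerivAt (fun y : ℝ => Real.exp (-y ^ 2 / 2)) (-x * Real.exp (-x ^ 2 / 2)) x := by
    have hi : HasDerivAt (fun y : ℝ => -y ^ 2 / 2) (-x) x := by
      have := ((hasDerivAt_pow 2 x).neg).div_const 2
      refine HasDerivAt.congr_deriv this ?_
      ring
    have := (Real.hasDerivAt_exp (-x ^ 2 / 2)).comp x hi
    refine HasDerivAt.congr_deriv this ?_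
    ring
  have hquot : HasDerivAt
      (fun y : ℝ => Real.sqrt (8 / Real.pi) / (3 * y + Real.sqrt (y ^ 2 + 8)))
      (-(Real.sqrt (8 / Real.pi) * (3 + x / Real.sqrt (x ^ 2 + 8))) /
        (3 * x + Real.sqrt (x ^ 2 + 8)) ^ 2) x := by
    have h := (hasDerivAt_const x (Real.sqrt (8 / Real.pi))).div hd (ne_of_gt (d_pos hx))
    refine HasDerivAt.congr_deriv h ?_
    ring
  have := hquot.mul hE
  exact this

lemma hasDerivAt_G {x : ℝ} (hx : -1 < x) : HasDerivAt G (D x) x :=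
  (hasDerivAt_cdf x).add (hasDerivAt_M hx)

lemma D_nonpos {x : ℝ} (hx : -1 < x) : D x ≤ 0 := by
  have hs0 := s_pos x
  have hs2 := s_sq x
  have hd0 := d_pos hx
  set s := Real.sqrt (x ^ 2 + 8) with hs
  set d := 3 * x + s with hdd
  set E := Real.exp (-x ^ 2 / 2) with hE
  have hEpos : 0 < E := Real.exp_pos _
  have hc : 0 < (Real.sqrt (2 * Real.pi))⁻¹ := inv_pos.2 sqrt_two_pi_pos
  set c := (Real.sqrt (2 * Real.pi))⁻¹ with hcc
  -- the key positivity fact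
  have ppos : 0 < s * (x ^ 2 + 2) - x * (x ^ 2 + 6) := by
    rcases le_or_gt x 0 with h | h
    · nlinarith [hs0, sq_nonneg x]
    · have ha : 0 < s * (x ^ 2 + 2) := mul_pos hs0 (by positivity)
      have hb : 0 < x * (x ^ 2 + 6) := mul_pos h (by positivity)
      have key2 : (s * (x ^ 2 + 2)) ^ 2 - (x * (x ^ 2 + 6)) ^ 2 = 32 := by
        rw [mul_pow, hs2]; ring
      nlinarith [key2, ha, hb]
  have hs3 : s ^ 3 = s * (x ^ 2 + 8) := by
    rw [pow_succ, hs2, mul_comm]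
  have hxs2 : x * s ^ 2 = x * (x ^ 2 + 8) := by rw [hs2]
  -- rewrite D as a single fraction
  have hD : D x = c * E * (s * d ^ 2 - 4 * (3 * s + x) - 4 * x * d * s) / (s * d ^ 2) := by
    unfold D
    rw [A_eq, ← hcc, ← hs, ← hdd, ← hE]
    field_simp
    ring
  rw [hD]
  have hnum : s * d ^ 2 - 4 * (3 * s + x) - 4 * x * d * s ≤ 0 := by
    rw [hdd]
    nlinarith [ppos, hs3, hxs2]
  have : c * E * (s * d ^ 2 - 4 * (3 * s + x) - 4 * x * d * s) ≤ 0 := by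
    have := mul_pos hc hEpos
    nlinarith
  exact div_nonpos_iff.2 (Or.inr ⟨this, by positivity⟩)

lemma G_ge_one {x : ℝ} (hx : -1 < x) : 1 ≤ G x := by
  have hanti : AntitoneOn G (Ici x) := by
    apply antitoneOn_of_deriv_nonpos (convex_Ici x)
    · exact fun y hy => ((hasDerivAt_G (hx.trans_le hy)).continuousAt).continuousWithinAt
    · intro y hy
      rw [interior_Ici] at hy
      exact (hasDerivAt_G (hx.trans hy)).differentiableAt.differentiableWithinAt
    · intro y hy
      rw [interior_Ici] at hy
      rw [(hasDerivAt_G (hx.trans hy)).deriv]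
      exact D_nonpos (hx.trans hy)
  have htend : Tendsto G atTop (𝓝 1) := by
    have h := cdf_tendsto.add M_tendsto
    rw [add_zero] at h
    exact h
  refine le_of_tendsto htend ?_
  filter_upwards [eventually_ge_atTop x] with y hy
  exact hanti self_mem_Ici hy hy

end StdNormalAux

/-- For every real `x > -1`,
`Φ(x) ≥ 1 − (√(8/π) / (3x + √(x² + 8))) · e^{−x²/2}`. -/
theorem stdNormalCDF_lower_bound (x : ℝ) (hx : -1 < x) :
    stdNormalCDF x ≥
      1 - (Real.sqrt (8 / Real.pi) / (3 * x + Real.sqrt (x ^ 2 + 8))) *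
        Real.exp (-x ^ 2 / 2) := by
  have h := StdNormalAux.G_ge_one hx
  unfold StdNormalAux.G StdNormalAux.M at h
  linarith
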